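/- arXiv:1001.1285 — 2 statements merged into one kernel-verified Lean document; each statement's English description precedes it below -/
import Mathlib

section
/- Let A be an associative ℂ-algebra and let b⁺, b⁻ ∈ A satisfy the osp(1|2) defining relations [{b⁻, b⁺}, b⁺] = 2b⁺ and [{b⁻, b⁺}, b⁻] = -2b⁻. Define h = (1/2){b⁻, b⁺}, e = (1/4){b⁺, b⁺}, f = -(1/4){b⁻, b⁻}, Ω = -(1/4)(4fe + h² + 2h), and C = -4Ω + (1/2)(b⁻b⁺ - b⁺b⁻). Then C² = (1 - 4Ω)(2C + 4Ω). -/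
/-! Write `K = ½ [b⁻, b⁺]`. The osp(1|2) relations say `[b⁻, b⁺²] = 2b⁺` and `[b⁻², b⁺] = 2b⁻`,
and these suffice to rewrite the even element `4fe + h² + 2h` as `K² − 2K`. So `Ω` is a polynomial
in `K`, namely `4Ω = 2K − K²`, whence `C = K² − K`, `1 − 4Ω = (K − 1)²` and `2C + 4Ω = K²`; the
identity becomes `(K² − K)² = (K − 1)² K²`, which holds because powers of `K` commute. -/

section Ring

variable {A : Type*} [Ring A]

theorem anticomm_mul_sub_mul_anticomm (a b : A) :
    (a * b + b * a) * b - b * (a * b + b * a) = a * b ^ 2 - b ^ 2 * a := by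
  noncomm_ring

theorem sq_anticomm_add_eq_sq_comm_sub {a b : A} (h1 : a * b ^ 2 - b ^ 2 * a = 2 • b)
    (h2 : a ^ 2 * b - b * a ^ 2 = 2 • a) :
    (a * b + b * a) ^ 2 + 4 • (a * b + b * a) - 4 • (a ^ 2 * b ^ 2) =
      (a * b - b * a) ^ 2 - 4 • (a * b - b * a) := by
  have h1' : a * b ^ 2 = b ^ 2 * a + 2 • b := eq_add_of_sub_eq' h1
  have h2' : a ^ 2 * b = b * a ^ 2 + 2 • a := eq_add_of_sub_eq' h2
  have hsq : a ^ 2 * b ^ 2 = a * b ^ 2 * a + 2 • (a * b) :=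
    calc a ^ 2 * b ^ 2 = a * (a * b ^ 2) := by noncomm_ring
      _ = a * (b ^ 2 * a + 2 • b) := by rw [h1']
      _ = a * b ^ 2 * a + 2 • (a * b) := by noncomm_ring
  have hsym : b * a ^ 2 * b = a * b ^ 2 * a :=
    calc b * a ^ 2 * b = b * (a ^ 2 * b) := mul_assoc _ _ _
      _ = b ^ 2 * a ^ 2 + 2 • (b * a) := by rw [h2']; noncomm_ring
      _ = a * b ^ 2 * a := by rw [h1']; noncomm_ring
  have hdiff : (a * b + b * a) ^ 2 + 4 • (a * b + b * a) - 4 • (a ^ 2 * b ^ 2) -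
      ((a * b - b * a) ^ 2 - 4 • (a * b - b * a)) =
      2 • (b * a ^ 2 * b - a * b ^ 2 * a) - 4 • (a ^ 2 * b ^ 2 - a * b ^ 2 * a - 2 • (a * b)) := by
    noncomm_ring
  rw [← sub_eq_zero, hdiff, hsym, hsq]
  noncomm_ring

end Ring

theorem sl2Casimir_eq_of_osp {𝕜 A : Type*} [Field 𝕜] [CharZero 𝕜] [Ring A] [Algebra 𝕜 A]
    {a b h e f : A}
    (rel1 : (a * b + b * a) * b - b * (a * b + b * a) = (2 : 𝕜) • b)
    (rel2 : (a * b + b * a) * a - a * (a * b + b * a) = (-2 : 𝕜) • a)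
    (hh : h = (1 / 2 : 𝕜) • (a * b + b * a)) (he : e = (1 / 4 : 𝕜) • (b * b + b * b))
    (hf : f = -((1 / 4 : 𝕜) • (a * a + a * a))) :
    (4 : 𝕜) • (f * e) + h ^ 2 + (2 : 𝕜) • h =
      ((1 / 2 : 𝕜) • (a * b - b * a)) ^ 2 - (2 : 𝕜) • ((1 / 2 : 𝕜) • (a * b - b * a)) := by
  have h1 : a * b ^ 2 - b ^ 2 * a = 2 • b := by
    rw [← anticomm_mul_sub_mul_anticomm, rel1, ofNat_smul_eq_nsmul]
  have h2 : a ^ 2 * b - b * a ^ 2 = 2 • a := by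
    rw [← neg_sub, ← anticomm_mul_sub_mul_anticomm b a, add_comm (b * a), rel2, neg_smul,
      neg_neg, ofNat_smul_eq_nsmul]
  subst hh he hf
  calc _ = (1 / 4 : 𝕜) • ((a * b + b * a) ^ 2 + 4 • (a * b + b * a) - 4 • (a ^ 2 * b ^ 2)) := by
        simp only [pow_two, mul_add, add_mul, neg_mul, smul_mul_smul_comm, smul_add, smul_sub,
          smul_neg, mul_assoc]
        module
    _ = _ := by
        rw [sq_anticomm_add_eq_sq_comm_sub h1 h2]
        simp only [pow_two, mul_sub, sub_mul, smul_mul_smul_comm, smul_sub, mul_assoc]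
        module

/-- If b⁺, b⁻ satisfy the osp(1|2) defining relations, with
Ω = -(1/4)(4fe + h² + 2h) and C = -4Ω + (1/2)(b⁻b⁺ - b⁺b⁻), then
C² = (1 - 4Ω)(2C + 4Ω). -/
theorem casimir_square_identity
    {A : Type*} [Ring A] [Algebra ℂ A] (bp bm : A)
    (rel1 : (bm * bp + bp * bm) * bp - bp * (bm * bp + bp * bm) = (2 : ℂ) • bp)
    (rel2 : (bm * bp + bp * bm) * bm - bm * (bm * bp + bp * bm) = (-2 : ℂ) • bm)
    (h e f Ω C : A)
    (hh : h = (1 / 2 : ℂ) • (bm * bp + bp * bm))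
    (he : e = (1 / 4 : ℂ) • (bp * bp + bp * bp))
    (hf : f = -((1 / 4 : ℂ) • (bm * bm + bm * bm)))
    (hΩ : Ω = -((1 / 4 : ℂ) • ((4 : ℂ) • (f * e) + h ^ 2 + (2 : ℂ) • h)))
    (hC : C = -((4 : ℂ) • Ω) + (1 / 2 : ℂ) • (bm * bp - bp * bm)) :
    C ^ 2 = (1 - (4 : ℂ) • Ω) * ((2 : ℂ) • C + (4 : ℂ) • Ω) := by
  set K : A := (1 / 2 : ℂ) • (bm * bp - bp * bm)
  have hΩK : (4 : ℂ) • Ω = 2 • K - K ^ 2 := by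
    rw [hΩ, sl2Casimir_eq_of_osp rel1 rel2 hh he hf]
    module
  have hCK : C = K ^ 2 - K := by
    rw [hC, hΩK]
    module
  have hfactor : 1 - (4 : ℂ) • Ω = (K - 1) ^ 2 := by
    rw [hΩK]
    noncomm_ring
  have hsum : (2 : ℂ) • C + (4 : ℂ) • Ω = K ^ 2 := by
    rw [hCK, hΩK, ofNat_smul_eq_nsmul]
    noncomm_ring
  rw [hfactor, hsum, hCK]
  noncomm_ring
end

section
/- Let μ > 0 be a real number, let V be the complex vector space of finitely supported functions ℕ → ℂ with standard basis (e_k)_{k ∈ ℕ}, and define linear operators b⁺, b⁻ on V by b⁺e_{2k} = √(2(2μ+k))·e_{2k+1}, b⁻e_{2k} = √(2k)·e_{2k-1} (so b⁻e_0 = 0), b⁺e_{2k+1} = √(2(k+1))·e_{2k+2}, and b⁻e_{2k+1} = √(2(2μ+k))·e_{2k}, for all k ∈ ℕ. Define h = (1/2){b⁻, b⁺}, e = (1/4){b⁺, b⁺}, f = -(1/4){b⁻, b⁻}, and Ω = -(1/4)(4fe + h² + 2h). Then Ω·e_{2k} = μ(1-μ)·e_{2k} and Ω·e_{2k+1} =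 (1/4 - μ²)·e_{2k+1} for every k ∈ ℕ; in particular, the su(1,1) Casimir Ω acts as a constant on the even-indexed basis vectors and as a (generally different) constant on the odd-indexed basis vectors. -/
/-!
In the basis `e_n`, the operators form a ladder: `b⁺ e_n = s_{n+1} e_{n+1}` and
`b⁻ e_n = s_n e_{n-1}` with `s_0 = 0`. Hence `b⁻b⁺`, `b⁺b⁻` and `(b⁻)²(b⁺)²` are diagonal
with eigenvalues `s_{n+1}²`, `s_n²` and `s_{n+1}² s_{n+2}²`, so the Casimir is diagonal as
well. Here `s_n² = n` for even `n` and `n - 1 + 4μ` for odd `n` (`parabosonWeight`), so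
`h e_n = (2μ + n) e_n`, and the diagonal entry of the Casimir is a polynomial in `n` and `μ`
whose dependence on `n` cancels within each parity class.
-/

open Finsupp

namespace Su11

variable {𝕜 M : Type*} [Field 𝕜] [AddCommGroup M] [Module 𝕜 M]

def h (bp bm : Module.End 𝕜 M) : Module.End 𝕜 M := (1 / 2 : 𝕜) • (bm * bp + bp * bm)

def e (bp : Module.End 𝕜 M) : Module.End 𝕜 M := (1 / 4 : 𝕜) • (bp * bp + bp * bp)

def f (bm : Module.End 𝕜 M) : Module.End 𝕜 M := -((1 / 4 : 𝕜) • (bm * bm + bm * bm))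

def casimir (bp bm : Module.End 𝕜 M) : Module.End 𝕜 M :=
  -((1 / 4 : 𝕜) • ((4 : 𝕜) • (f bm * e bp) + h bp bm ^ 2 + (2 : 𝕜) • h bp bm))

theorem h_apply_of_eigen {bp bm : Module.End 𝕜 M} {v : M} {a c : 𝕜}
    (hmp : bm (bp v) = a • v) (hpm : bp (bm v) = c • v) :
    h bp bm v = ((a + c) / 2) • v := by
  simp only [h, LinearMap.smul_apply, LinearMap.add_apply, Module.End.mul_apply, hmp, hpm,
    ← add_smul, smul_smul]
  congr 1
  ring

theorem casimir_apply_of_eigen [CharZero 𝕜] {bp bm : Module.End 𝕜 M} {v : M} {a c d : 𝕜}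
    (hmp : bm (bp v) = a • v) (hpm : bp (bm v) = c • v)
    (hmmpp : bm (bm (bp (bp v))) = d • v) :
    casimir bp bm v = ((d - ((a + c) / 2) ^ 2 - (a + c)) / 4) • v := by
  have hv := h_apply_of_eigen hmp hpm
  simp only [casimir, f, e, LinearMap.neg_apply, LinearMap.smul_apply, LinearMap.add_apply,
    pow_two, Module.End.mul_apply, hv, map_smul, hmmpp, smul_smul, smul_add, ← add_smul,
    ← neg_smul]
  congr 1
  field_simp
  ring

end Su11

/-- The truncated subtraction in `lower` is harmless at `n = 0` because `s 0 = 0`. -/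
structure IsLadder {R : Type*} [CommSemiring R] (bp bm : Module.End R (ℕ →₀ R))
    (s : ℕ → R) : Prop where
  coeff_zero : s 0 = 0
  raise : ∀ n, bp (single n 1) = s (n + 1) • single (n + 1) 1
  lower : ∀ n, bm (single n 1) = s n • single (n - 1) 1

namespace IsLadder

section CommSemiring

variable {R : Type*} [CommSemiring R] {bp bm : Module.End R (ℕ →₀ R)} {s : ℕ → R}

theorem lower_raise (hL : IsLadder bp bm s) (n : ℕ) :
    bm (bp (single n 1)) = (s (n + 1) * s (n + 1)) • single n 1 := by
  rw [hL.raise, map_smul, hL.lower, Nat.add_sub_cancel, smul_smul]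

theorem raise_lower (hL : IsLadder bp bm s) (n : ℕ) :
    bp (bm (single n 1)) = (s n * s n) • single n 1 := by
  cases n with
  | zero => simp [hL.lower, hL.coeff_zero]
  | succ n => rw [hL.lower, map_smul, Nat.add_sub_cancel, hL.raise, smul_smul]

theorem lower_lower_raise_raise (hL : IsLadder bp bm s) (n : ℕ) :
    bm (bm (bp (bp (single n 1)))) =
      (s (n + 1) * s (n + 1) * (s (n + 2) * s (n + 2))) • single n 1 := by
  simp only [hL.raise, hL.lower, map_smul, smul_smul, Nat.add_sub_cancel]
  congr 1
  ring

end CommSemiring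

theorem casimir_apply_single {𝕜 : Type*} [Field 𝕜] [CharZero 𝕜]
    {bp bm : Module.End 𝕜 (ℕ →₀ 𝕜)} {s : ℕ → 𝕜} (hL : IsLadder bp bm s) (n : ℕ) :
    Su11.casimir bp bm (single n 1) =
      ((s (n + 1) * s (n + 1) * (s (n + 2) * s (n + 2)) -
          ((s (n + 1) * s (n + 1) + s n * s n) / 2) ^ 2 -
          (s (n + 1) * s (n + 1) + s n * s n)) / 4) • single n 1 :=
  Su11.casimir_apply_of_eigen (hL.lower_raise n) (hL.raise_lower n)
    (hL.lower_lower_raise_raise n)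

end IsLadder

def parabosonWeight (μ : ℝ) (n : ℕ) : ℝ := if Even n then n else n - 1 + 4 * μ

theorem parabosonWeight_nonneg {μ : ℝ} (hμ : 0 ≤ μ) (n : ℕ) : 0 ≤ parabosonWeight μ n := by
  unfold parabosonWeight
  split_ifs with hn
  · positivity
  · have : (1 : ℝ) ≤ n := Nat.one_le_cast.mpr (Nat.pos_of_ne_zero (by rintro rfl; simp at hn))
    linarith

theorem parabosonWeight_two_mul (μ : ℝ) (k : ℕ) : parabosonWeight μ (2 * k) = 2 * k := by
  simp [parabosonWeight]

theorem parabosonWeight_two_mul_add_one (μ : ℝ) (k : ℕ) :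
    parabosonWeight μ (2 * k + 1) = 2 * (2 * μ + k) := by
  simp [parabosonWeight]
  ring

theorem isLadder_of_paraboson {μ : ℝ} {bp bm : Module.End ℂ (ℕ →₀ ℂ)}
    (hbp_even : ∀ k : ℕ, bp (single (2 * k) 1) =
      (√(2 * (2 * μ + k)) : ℂ) • single (2 * k + 1) 1)
    (hbm_zero : bm (single 0 1) = 0)
    (hbm_even : ∀ k : ℕ, bm (single (2 * (k + 1)) 1) =
      (√(2 * (k + 1)) : ℂ) • single (2 * k + 1) 1)
    (hbp_odd : ∀ k : ℕ, bp (single (2 * k + 1) 1) =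
      (√(2 * (k + 1)) : ℂ) • single (2 * k + 2) 1)
    (hbm_odd : ∀ k : ℕ, bm (single (2 * k + 1) 1) =
      (√(2 * (2 * μ + k)) : ℂ) • single (2 * k) 1) :
    IsLadder bp bm (fun n ↦ (√(parabosonWeight μ n) : ℂ)) where
  coeff_zero := by simp [parabosonWeight]
  raise n := by
    obtain ⟨k, rfl | rfl⟩ := Nat.even_or_odd' n
    · rw [hbp_even, parabosonWeight_two_mul_add_one]
    · rw [hbp_odd, show 2 * k + 1 + 1 = 2 * (k + 1) by ring, parabosonWeight_two_mul]
      push_cast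
      rfl
  lower n := by
    obtain ⟨k, rfl | rfl⟩ := Nat.even_or_odd' n
    · cases k with
      | zero => simp [hbm_zero, parabosonWeight]
      | succ k =>
        rw [hbm_even, parabosonWeight_two_mul, show 2 * (k + 1) - 1 = 2 * k + 1 by omega]
        push_cast
        rfl
    · rw [hbm_odd, parabosonWeight_two_mul_add_one, Nat.add_sub_cancel]

theorem casimir_apply_single_of_isLadder_paraboson {μ : ℝ} (hμ : 0 ≤ μ)
    {bp bm : Module.End ℂ (ℕ →₀ ℂ)}
    (hL : IsLadder bp bm (fun n ↦ (√(parabosonWeight μ n) : ℂ))) (n : ℕ) :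
    Su11.casimir bp bm (single n 1) =
      ((if Even n then μ * (1 - μ) else 1 / 4 - μ ^ 2 : ℝ) : ℂ) • single n 1 := by
  rw [hL.casimir_apply_single]
  congr 1
  simp only [← Complex.ofReal_mul, Real.mul_self_sqrt (parabosonWeight_nonneg hμ _)]
  by_cases hn : Even n <;> simp [parabosonWeight, hn, Nat.even_add_one] <;> ring

/-- for μ > 0 and the osp(1|2) representation operators b⁺, b⁻
on finitely supported functions ℕ → ℂ, the su(1,1) Casimir
Ω = -(1/4)(4fe + h² + 2h) acts as μ(1-μ) on the even-indexed basis vectors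
and as 1/4 - μ² on the odd-indexed basis vectors. -/
theorem su11_casimir_action_on_basis
    (μ : ℝ) (hμ : 0 < μ)
    (bp bm : Module.End ℂ (ℕ →₀ ℂ))
    (hbp_even : ∀ k : ℕ, bp (Finsupp.single (2 * k) 1) =
      ((Real.sqrt (2 * (2 * μ + k)) : ℝ) : ℂ) • Finsupp.single (2 * k + 1) 1)
    (hbm_zero : bm (Finsupp.single 0 1) = 0)
    (hbm_even : ∀ k : ℕ, bm (Finsupp.single (2 * (k + 1)) 1) =
      ((Real.sqrt (2 * (k + 1)) : ℝ) : ℂ) • Finsupp.single (2 * k + 1) 1)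
    (hbp_odd : ∀ k : ℕ, bp (Finsupp.single (2 * k + 1) 1) =
      ((Real.sqrt (2 * (k + 1)) : ℝ) : ℂ) • Finsupp.single (2 * k + 2) 1)
    (hbm_odd : ∀ k : ℕ, bm (Finsupp.single (2 * k + 1) 1) =
      ((Real.sqrt (2 * (2 * μ + k)) : ℝ) : ℂ) • Finsupp.single (2 * k) 1)
    (h e f Ω : Module.End ℂ (ℕ →₀ ℂ))
    (hh : h = (1 / 2 : ℂ) • (bm * bp + bp * bm))
    (he : e = (1 / 4 : ℂ) • (bp * bp + bp * bp))
    (hf : f = -((1 / 4 : ℂ) • (bm * bm + bm * bm)))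
    (hΩ : Ω = -((1 / 4 : ℂ) • ((4 : ℂ) • (f * e) + h ^ 2 + (2 : ℂ) • h))) :
    ∀ k : ℕ,
      Ω (Finsupp.single (2 * k) 1) =
        ((μ * (1 - μ) : ℝ) : ℂ) • Finsupp.single (2 * k) 1 ∧
      Ω (Finsupp.single (2 * k + 1) 1) =
        ((1 / 4 - μ ^ 2 : ℝ) : ℂ) • Finsupp.single (2 * k + 1) 1 := by
  have hΩ_casimir : Ω = Su11.casimir bp bm := by subst hh he hf; exact hΩ
  have hL := isLadder_of_paraboson hbp_even hbm_zero hbm_even hbp_odd hbm_odd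
  intro k
  rw [hΩ_casimir]
  constructor
  · simpa using casimir_apply_single_of_isLadder_paraboson hμ.le hL (2 * k)
  · simpa [Nat.even_add_one] using
      casimir_apply_single_of_isLadder_paraboson hμ.le hL (2 * k + 1)
end
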